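/- Let Ω be a bounded self-adjoint operator on a Hilbert space H and S ⊆ H. Then the orbit O_Ω(S), defined as the smallest closed subspace containing S and invariant under Ω, equals the smallest closed subspace containing S that is invariant under the resolvent (Ω - i)⁻¹. -/

import Mathlib

/-!
Let `B` be the closed algebra of operators leaving a closed subspace `K` invariant. By spectral
permanence, a point of the `B`-spectrum of `x ∈ B` outside its spectrum in `H →L[ℂ] H` lies in a
bounded component of the complement of the latter. For self-adjoint `Ω` the complement of
`σ(Ω) ⊆ ℝ` is connected, so `Ω ∈ B` gives `(Ω - i)⁻¹ ∈ B`. Conversely,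
`σ((Ω - i)⁻¹) = {1 / (λ - i) : λ ∈ σ(Ω)}` misses the unbounded ray `-i·[0, ∞)` through `0`,
so `(Ω - i)⁻¹ ∈ B` is invertible in `B`, i.e. `Ω - i ∈ B`.
-/

open ContinuousLinearMap MeasureTheory

/-- The orbit of a set `S` under an operator `Ω`: the smallest closed `Ω`-invariant
subspace containing `S`. -/
noncomputable def orbit {H : Type*} [NormedAddCommGroup H] [InnerProductSpace ℂ H]
    (Ω : H →L[ℂ] H) (S : Set H) : Submodule ℂ H :=
  sInf {K : Submodule ℂ H | S ⊆ K ∧ IsClosed (K : Set H) ∧ ∀ x ∈ K, Ω x ∈ K}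

open Complex Bornology Set

lemma Subalgebra.mem_of_mul_eq_one {R A : Type*} [CommSemiring R] [Semiring A] [Algebra R A]
    (S : Subalgebra R A) {x : S} (hx : IsUnit x) {b : A} (h : b * x = 1) : b ∈ S := by
  obtain ⟨u, rfl⟩ := hx
  have hu : (u : A) * ↑(↑u⁻¹ : S) = 1 := congrArg ((↑) : S → A) u.mul_inv
  rw [left_inv_eq_right_inv h hu]
  exact SetLike.coe_mem _

lemma Subalgebra.notMem_spectrum_of_isPreconnected {𝕜 A : Type*} [NormedField 𝕜] [NormedRing A]
    [CompleteSpace A] [NormedAlgebra 𝕜 A] (S : Subalgebra 𝕜 A) [IsClosed (S : Set A)] (x : S)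
    {C : Set 𝕜} (hC : IsPreconnected C) (hCb : ¬ IsBounded C)
    (hCσ : ∀ z ∈ C, z ∉ spectrum 𝕜 (x : A)) {z : 𝕜} (hz : z ∈ C) : z ∉ spectrum 𝕜 x :=
  fun hzσ ↦ hCb <| (Subalgebra.spectrum_isBounded_connectedComponentIn S x hzσ).subset <|
    hC.subset_connectedComponentIn hz hCσ

namespace Submodule

variable {𝕜 E : Type*} [NontriviallyNormedField 𝕜] [NormedAddCommGroup E] [NormedSpace 𝕜 E]

def stabilizerSubalgebra (K : Submodule 𝕜 E) : Subalgebra 𝕜 (E →L[𝕜] E) where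
  carrier := {T | ∀ x ∈ K, T x ∈ K}
  mul_mem' hS hT x hx := hS _ (hT x hx)
  add_mem' hS hT x hx := K.add_mem (hS x hx) (hT x hx)
  algebraMap_mem' c x hx := by simpa [Algebra.algebraMap_eq_smul_one] using K.smul_mem c hx

lemma mem_stabilizerSubalgebra {K : Submodule 𝕜 E} {T : E →L[𝕜] E} :
    T ∈ K.stabilizerSubalgebra ↔ ∀ x ∈ K, T x ∈ K := Iff.rfl

lemma isClosed_stabilizerSubalgebra {K : Submodule 𝕜 E} (hK : IsClosed (K : Set E)) :
    IsClosed (K.stabilizerSubalgebra : Set (E →L[𝕜] E)) := by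
  have : (K.stabilizerSubalgebra : Set (E →L[𝕜] E)) = ⋂ x ∈ K, (fun T ↦ T x) ⁻¹' K := by
    ext T; simp [mem_stabilizerSubalgebra]
  rw [this]
  exact isClosed_biInter fun x _ ↦ hK.preimage (continuous_eval_const x)

end Submodule

section

variable {A : Type*} [CStarAlgebra A] {a r : A}

lemma IsSelfAdjoint.inverse_mem_of_mem (ha : IsSelfAdjoint a) (S : Subalgebra ℂ A)
    [IsClosed (S : Set A)] (haS : a ∈ S) (hr : r * (a - I • 1) = 1) : r ∈ S := by
  let x : S := ⟨a, haS⟩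
  have hσ : I ∉ spectrum ℂ x := by
    rw [Subalgebra.spectrum_eq_of_isPreconnected_compl S x
      ha.isConnected_spectrum_compl.isPreconnected]
    exact fun h ↦ by simpa using ha.im_eq_zero_of_mem_spectrum h
  have hr' : -r * (algebraMap ℂ A I - a) = 1 := by
    rw [← hr, Algebra.algebraMap_eq_smul_one, neg_mul, ← mul_neg, neg_sub]
  have : -r ∈ S := S.mem_of_mul_eq_one (spectrum.notMem_iff.mp hσ) hr'
  simpa using S.neg_mem this

lemma IsSelfAdjoint.neg_I_mul_notMem_spectrum (ha : IsSelfAdjoint a)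
    (h₁ : (a - I • 1) * r = 1) (h₂ : r * (a - I • 1) = 1) {s : ℝ} (hs : 0 ≤ s) :
    -(I * s) ∉ spectrum ℂ r := by
  let u : Aˣ := ⟨a - I • 1, r, h₁, h₂⟩
  intro h
  rw [show r = ↑u⁻¹ from rfl, ← spectrum.map_inv, Set.mem_inv,
    show (u : A) = a - algebraMap ℂ A I by simp [u, Algebra.algebraMap_eq_smul_one],
    ← spectrum.sub_singleton_eq] at h
  obtain ⟨w, hw, _, rfl, hw'⟩ := h
  -- `(-(I * s))⁻¹` has imaginary part `s⁻¹`, also for `s = 0` where both are junk zeros.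
  have him : (-1 : ℝ) = s⁻¹ := by
    simpa [ha.im_eq_zero_of_mem_spectrum hw] using congrArg Complex.im hw'
  linarith [inv_nonneg.mpr hs]

lemma IsSelfAdjoint.mem_of_inverse_mem (ha : IsSelfAdjoint a) (S : Subalgebra ℂ A)
    [IsClosed (S : Set A)] (hrS : r ∈ S) (h₁ : (a - I • 1) * r = 1)
    (h₂ : r * (a - I • 1) = 1) : a ∈ S := by
  let ray : Set ℂ := (fun s : ℝ ↦ -(I * s)) '' Ici 0
  have hray : ¬ IsBounded ray := by
    rw [isBounded_iff_forall_norm_le]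
    rintro ⟨M, hM⟩
    have := hM _ (mem_image_of_mem _ (show (0 : ℝ) ≤ |M| + 1 by positivity))
    simp only [norm_neg, norm_mul, norm_I, one_mul, norm_real, Real.norm_eq_abs] at this
    linarith [le_abs_self M, le_abs_self (|M| + 1)]
  have h0 : (0 : ℂ) ∉ spectrum ℂ (⟨r, hrS⟩ : S) :=
    S.notMem_spectrum_of_isPreconnected _
      (isPreconnected_Ici.image _ (by fun_prop)) hray
      (by rintro _ ⟨s, hs, rfl⟩; exact ha.neg_I_mul_notMem_spectrum h₁ h₂ hs)
      ⟨0, self_mem_Ici, by simp⟩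
  have : a - I • 1 ∈ S := S.mem_of_mul_eq_one (spectrum.zero_notMem_iff ℂ |>.mp h0) h₁
  simpa using S.add_mem this (S.smul_mem S.one_mem I)

theorem IsSelfAdjoint.mem_iff_inverse_mem (ha : IsSelfAdjoint a) (S : Subalgebra ℂ A)
    [IsClosed (S : Set A)] (h₁ : (a - I • 1) * r = 1) (h₂ : r * (a - I • 1) = 1) :
    a ∈ S ↔ r ∈ S :=
  ⟨fun haS ↦ ha.inverse_mem_of_mem S haS h₂, fun hrS ↦ ha.mem_of_inverse_mem S hrS h₁ h₂⟩

end

/-- for a bounded self-adjoint `Ω`, the smallest closed `Ω`-invariant subspace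
containing `S` equals the smallest closed subspace containing `S` invariant under the
resolvent `(Ω - i)⁻¹`. -/
theorem orbit_eq_resolvent_orbit {H : Type*} [NormedAddCommGroup H] [InnerProductSpace ℂ H]
    [CompleteSpace H] (Ω : H →L[ℂ] H) (hΩ : IsSelfAdjoint Ω) (S : Set H)
    (R : H →L[ℂ] H)
    (hR₁ : (Ω - Complex.I • (1 : H →L[ℂ] H)) ∘L R = 1)
    (hR₂ : R ∘L (Ω - Complex.I • (1 : H →L[ℂ] H)) = 1) :
    orbit Ω S =
      sInf {K : Submodule ℂ H | S ⊆ K ∧ IsClosed (K : Set H) ∧ ∀ x ∈ K, R x ∈ K} := by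
  refine congrArg sInf (Set.ext fun K ↦ and_congr_right fun _ ↦ and_congr_right fun hK ↦ ?_)
  have := Submodule.isClosed_stabilizerSubalgebra hK
  exact hΩ.mem_iff_inverse_mem K.stabilizerSubalgebra hR₁ hR₂
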